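/- arXiv:2507.22476 — 2 statements merged into one kernel-verified Lean document; each statement's English description precedes it below -/
import Mathlib

section
/- Assume CH. Then every nowhere dense P-filter on ℕ contains a tower: there is a tower all of whose members belong to the filter. -/
open Set

/-- `A ⊆* B`: `A` is almost contained in `B`, i.e. `A \ B` is finite. -/
def AlmostSubset (A B : Set ℕ) : Prop := (A \ B).Finite

/-- An ideal on ℕ: contains `∅`, does not contain `ℕ`, and is closed under subsets and
finite unions. -/
def IsIdealFam (I : Set (Set ℕ)) : Prop :=
  ∅ ∈ I ∧ (univ : Set ℕ) ∉ I ∧ (∀ A B : Set ℕ, B ∈ I → A ⊆ B → A ∈ I) ∧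
    ∀ A B : Set ℕ, A ∈ I → B ∈ I → A ∪ B ∈ I

/-- A P-ideal: an ideal in which every countable subfamily has a pseudounion belonging to
the ideal. -/
def IsPIdeal (I : Set (Set ℕ)) : Prop :=
  IsIdealFam I ∧ ∀ C : Set (Set ℕ), C.Countable → C ⊆ I →
    ∃ B ∈ I, ∀ A ∈ C, AlmostSubset A B

/-- A family of sets is tall if every infinite subset of ℕ has infinite intersection with
some member of the family. -/
def IsTallFam (I : Set (Set ℕ)) : Prop :=
  ∀ A : Set ℕ, A.Infinite → ∃ B ∈ I, (A ∩ B).Infinite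

/-- A filter on ℕ: contains `ℕ`, does not contain `∅`, and is closed under finite
intersections and supersets. -/
def IsFilterFam (F : Set (Set ℕ)) : Prop :=
  (univ : Set ℕ) ∈ F ∧ ∅ ∉ F ∧ (∀ A B : Set ℕ, A ∈ F → B ∈ F → A ∩ B ∈ F) ∧
    ∀ A B : Set ℕ, A ∈ F → A ⊆ B → B ∈ F

/-- A P-filter: a filter in which every countable subfamily has an infinite
pseudointersection belonging to the filter. -/
def IsPFilterFam (F : Set (Set ℕ)) : Prop :=
  IsFilterFam F ∧ ∀ C : Set (Set ℕ), C.Countable → C ⊆ F →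
    ∃ X ∈ F, X.Infinite ∧ ∀ A ∈ C, AlmostSubset X A

/-- A family of sets is nowhere dense (as a filter) if it has no infinite
pseudointersection. -/
def IsNwdFam (F : Set (Set ℕ)) : Prop :=
  ¬ ∃ X : Set ℕ, X.Infinite ∧ ∀ A ∈ F, AlmostSubset X A

/-- A (decreasing) tower: a `⊆*`-decreasing family of infinite subsets of ℕ indexed by an
ordinal `κ`, with no infinite pseudointersection. -/
def IsTower (κ : Ordinal) (A : Ordinal → Set ℕ) : Prop :=
  (∀ α < κ, (A α).Infinite) ∧
  (∀ α β : Ordinal, α < β → β < κ → AlmostSubset (A β) (A α)) ∧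
  ¬ ∃ X : Set ℕ, X.Infinite ∧ ∀ α < κ, AlmostSubset X (A α)

/-- An increasing tower: a `⊆*`-increasing family of infinite subsets of ℕ indexed by an
ordinal `κ` such that every infinite subset of ℕ has infinite intersection with some
member. -/
def IsIncTower (κ : Ordinal) (B : Ordinal → Set ℕ) : Prop :=
  (∀ α < κ, (B α).Infinite) ∧
  (∀ α β : Ordinal, α < β → β < κ → AlmostSubset (B α) (B β)) ∧
  ∀ X : Set ℕ, X.Infinite → ∃ γ < κ, (B γ ∩ X).Infinite

/-!
Under CH, enumerate all subsets of ℕ as `(X_α)_{α < ω₁}`. Every proper initial segment of `ω₁`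
is countable, so the P-filter property gives, by recursion, a `⊆*`-decreasing sequence
`A_α ∈ F`; since `F` is nowhere dense, `A_α` can moreover be shrunk inside `F` so that
`X_α ⊄* A_α` whenever `X_α` is infinite. Hence no infinite set is a pseudointersection of the
`A_α`, and their members are infinite because they lie in a P-filter.
-/

open Cardinal
open scoped Ordinal

universe u v

theorem AlmostSubset.infinite {X S : Set ℕ} (h : AlmostSubset X S) (hX : X.Infinite) :
    S.Infinite :=
  (hX.sdiff h).mono (by rw [sdiff_sdiff_right_self]; exact inter_subset_right)

theorem Ordinal.countable_Iio_of_lt_omega_one {α : Ordinal.{u}} (hα : α < ω₁) :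
    (Iio α).Countable := by
  rw [← le_aleph0_iff_set_countable, Cardinal.mk_Iio_ordinal, lift_le_aleph0, ← lt_aleph_one_iff]
  exact lt_omega_iff_card_lt.mp hα

theorem exists_surjOn_Iio_ord_of_lift_mk_le {β : Type v} [Nonempty β] {c : Cardinal.{u}}
    (h : lift.{u} #β ≤ lift.{v} c) : ∃ f : Ordinal.{u} → β, SurjOn f (Iio c.ord) univ := by
  obtain ⟨e⟩ : Nonempty (β ↪ Iio c.ord) := by
    rw [← lift_mk_le', mk_Iio_ordinal, card_ord]
    simpa only [lift_lift] using lift_le.{u + 1}.mpr h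
  refine ⟨Function.invFun fun b => (e b : Ordinal), fun b _ => ⟨e b, (e b).2, ?_⟩⟩
  exact Function.leftInverse_invFun (Subtype.val_injective.comp e.injective) b

theorem exists_surjOn_Iio_omega_one_of_ch (ch : (2 : Cardinal.{u}) ^ ℵ₀ = ℵ₁) :
    ∃ f : Ordinal.{v} → Set ℕ, SurjOn f (Iio ω₁) univ := by
  rw [← ord_aleph]
  refine exists_surjOn_Iio_ord_of_lift_mk_le (le_of_eq ?_)
  apply lift_injective.{u}
  simpa using congrArg lift.{v} ch

/-- `Classical.epsilon` picks a witness whenever one exists, which `diagonalTower_spec` shows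
for every stage below `ω₁`; further stages are junk. -/
noncomputable def diagonalTower (F : Set (Set ℕ)) (f : Ordinal.{u} → Set ℕ) :
    Ordinal.{u} → Set ℕ :=
  WellFoundedLT.fix fun α A => Classical.epsilon fun S =>
    S ∈ F ∧ (∀ β (hβ : β < α), AlmostSubset S (A β hβ)) ∧
      ((f α).Infinite → ¬ AlmostSubset (f α) S)

namespace IsPFilterFam

variable {F : Set (Set ℕ)}

theorem infinite_of_mem (hP : IsPFilterFam F) {S : Set ℕ} (hS : S ∈ F) : S.Infinite := by
  obtain ⟨X, -, hX, hXS⟩ := hP.2 {S} (countable_singleton S) (singleton_subset_iff.mpr hS)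
  exact (hXS S rfl).infinite hX

theorem exists_mem_almostSubset_not_almostSubset (hP : IsPFilterFam F) (hnwd : IsNwdFam F)
    {C : Set (Set ℕ)} (hC : C.Countable) (hCF : C ⊆ F) (X : Set ℕ) :
    ∃ S ∈ F, (∀ A ∈ C, AlmostSubset S A) ∧ (X.Infinite → ¬ AlmostSubset X S) := by
  obtain ⟨Y, hYF, -, hY⟩ := hP.2 C hC hCF
  by_cases hX : X.Infinite
  · obtain ⟨B, hBF, hXB⟩ : ∃ B ∈ F, ¬ AlmostSubset X B := by
      by_contra! h
      exact hnwd ⟨X, hX, h⟩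
    refine ⟨Y ∩ B, hP.1.2.2.1 Y B hYF hBF,
      fun A hA => (hY A hA).subset (sdiff_subset_sdiff_left inter_subset_left),
      fun _ hXYB => hXB (hXYB.subset (sdiff_subset_sdiff_right inter_subset_right))⟩
  · exact ⟨Y, hYF, hY, fun h => absurd h hX⟩

theorem diagonalTower_spec (hP : IsPFilterFam F) (hnwd : IsNwdFam F) (f : Ordinal.{u} → Set ℕ)
    {α : Ordinal.{u}} (hα : α < ω₁) :
    diagonalTower F f α ∈ F ∧
      (∀ β < α, AlmostSubset (diagonalTower F f α) (diagonalTower F f β)) ∧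
      ((f α).Infinite → ¬ AlmostSubset (f α) (diagonalTower F f α)) := by
  induction α using WellFoundedLT.induction with
  | ind α ih =>
  have hprev : diagonalTower F f '' Iio α ⊆ F := by
    rintro _ ⟨β, hβ, rfl⟩
    exact (ih β hβ (hβ.trans hα)).1
  obtain ⟨S, hSF, hSprev, hSf⟩ := hP.exists_mem_almostSubset_not_almostSubset hnwd
    ((Ordinal.countable_Iio_of_lt_omega_one hα).image _) hprev (f α)
  have hS : ∃ S ∈ F, (∀ β < α, AlmostSubset S (diagonalTower F f β)) ∧
      ((f α).Infinite → ¬ AlmostSubset (f α) S) :=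
    ⟨S, hSF, fun β hβ => hSprev _ (mem_image_of_mem _ hβ), hSf⟩
  rw [diagonalTower, WellFoundedLT.fix_eq]
  exact Classical.epsilon_spec hS

end IsPFilterFam

/-- Under CH, every nowhere dense P-filter on ℕ contains a tower. -/
theorem nwd_Pfilter_contains_tower_of_CH
    (ch : (2 : Cardinal) ^ Cardinal.aleph0 = Cardinal.aleph 1)
    (F : Set (Set ℕ)) (hP : IsPFilterFam F) (hnwd : IsNwdFam F) :
    ∃ (κ : Ordinal) (A : Ordinal → Set ℕ), IsTower κ A ∧ ∀ α < κ, A α ∈ F := by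
  obtain ⟨f, hf⟩ := exists_surjOn_Iio_omega_one_of_ch ch
  have hA := fun α (hα : α < ω₁) => hP.diagonalTower_spec hnwd f hα
  refine ⟨ω₁, diagonalTower F f, ⟨fun α hα => hP.infinite_of_mem (hA α hα).1,
    fun α β hαβ hβ => (hA β hβ).2.1 α hαβ, ?_⟩, fun α hα => (hA α hα).1⟩
  rintro ⟨X, hX, hXA⟩
  obtain ⟨α, hα, rfl⟩ := hf (mem_univ X)
  exact (hA α hα).2.2 hX (hXA α hα)
end

section
/- If every nonprincipal ultrafilter on ℕ contains a tower (i.e., for every nonprincipal ultrafilter U there is a tower all of whose members belong to U), then ω* can be covered by nowhere dense P-sets: ω* is the union of a family of subsets each of which is a nowhere dense P-set of ω*. -/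
open Set

/-- A subset `B` of a topological space is a P-set if the intersection of countably many
neighborhoods of `B` is again a neighborhood of `B`. -/
def IsPSet {X : Type*} [TopologicalSpace X] (B : Set X) : Prop :=
  ∀ U : ℕ → Set X, (∀ n, IsOpen (U n) ∧ B ⊆ U n) →
    ∃ V : Set X, IsOpen V ∧ B ⊆ V ∧ V ⊆ ⋂ n, U n

/-- An ultrafilter is nonprincipal if it contains no finite set. -/
def Nonprincipal (U : Ultrafilter ℕ) : Prop := ∀ A : Set ℕ, A.Finite → A ∉ U

/-- `ω* = βℕ ∖ ℕ`: the space of nonprincipal ultrafilters on ℕ with the Stone topology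
(as a subspace of the space of all ultrafilters on ℕ). -/
def OmegaStar : Type := {U : Ultrafilter ℕ // Nonprincipal U}

instance : TopologicalSpace OmegaStar := instTopologicalSpaceSubtype

/-!
An ultrafilter `p` containing a tower `A` lies in the closed set `K = ⋂_{α<κ} (A α)*`. `K` is
nowhere dense, since a basic open set `B*` inside it would make `B` an infinite
pseudointersection of the tower. `K` is a P-set: by compactness every open neighbourhood of `K`
contains some `(A α)*`, and a tower has uncountable cofinality (a countable cofinal sequence would
have a diagonal pseudointersection), so countably many neighbourhoods contain a common `(A γ)*`.
-/

open Topology TopologicalSpace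

lemma AlmostSubset.trans {A B C : Set ℕ} (hAB : AlmostSubset A B) (hBC : AlmostSubset B C) :
    AlmostSubset A C :=
  (hAB.union hBC).subset fun x ⟨hxA, hxC⟩ => by
    by_cases hxB : x ∈ B
    exacts [Or.inr ⟨hxB, hxC⟩, Or.inl ⟨hxA, hxB⟩]

lemma almostSubset_of_subset {A B : Set ℕ} (h : A ⊆ B) : AlmostSubset A B := by
  simp [AlmostSubset, sdiff_eq_empty.2 h]

lemma almostSubset_biInter {ι : Type*} {s : Finset ι} {A : Set ℕ} {B : ι → Set ℕ}
    (h : ∀ i ∈ s, AlmostSubset A (B i)) : AlmostSubset A (⋂ i ∈ s, B i) := by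
  simp only [AlmostSubset, sdiff_iInter]
  exact s.finite_toSet.biUnion h

lemma Set.Infinite.inter_of_almostSubset {A B : Set ℕ} (hA : A.Infinite)
    (h : AlmostSubset A B) : (A ∩ B).Infinite := by
  refine (hA.sdiff h).mono ?_
  rintro x ⟨hxA, hx⟩
  exact ⟨hxA, not_not.1 fun hxB => hx ⟨hxA, hxB⟩⟩

/-- Choosing `x n ∈ B n` with `n < x n` makes `{x n}` infinite, and only `x 0, …, x (k-1)` can
miss `B k`. -/
lemma exists_infinite_almostSubset_of_antitone {B : ℕ → Set ℕ} (hB : Antitone B)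
    (hinf : ∀ n, (B n).Infinite) : ∃ X : Set ℕ, X.Infinite ∧ ∀ n, AlmostSubset X (B n) := by
  choose x hxB hlt using fun n => (hinf n).exists_gt n
  refine ⟨range x, infinite_of_not_bddAbove ?_, fun k => ?_⟩
  · rintro ⟨b, hb⟩
    exact (hlt b).not_ge (hb ⟨b, rfl⟩)
  · refine ((finite_Iio k).image x).subset ?_
    rintro _ ⟨⟨n, rfl⟩, hn⟩
    exact ⟨n, not_le.1 fun hkn => hn (hB hkn (hxB n)), rfl⟩

namespace IsTower

variable {κ : Ordinal} {A : Ordinal → Set ℕ}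

lemma pos (hT : IsTower κ A) : 0 < κ :=
  pos_iff_ne_zero.2 fun h => hT.2.2 ⟨univ, infinite_univ, fun _ hα => absurd hα (h ▸ not_lt_zero)⟩

lemma almostSubset_of_le (hT : IsTower κ A) {α β : Ordinal} (hαβ : α ≤ β) (hβ : β < κ) :
    AlmostSubset (A β) (A α) := by
  rcases hαβ.eq_or_lt with rfl | hlt
  exacts [almostSubset_of_subset subset_rfl, hT.2.1 α β hlt hβ]

lemma infinite_biInter_range (hT : IsTower κ A) (f : ℕ → Ordinal) (hf : ∀ n, f n < κ) (n : ℕ) :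
    (⋂ k ∈ Finset.range (n + 1), A (f k)).Infinite := by
  obtain ⟨m, -, hmax⟩ := (Finset.range (n + 1)).exists_max_image f ⟨0, by simp⟩
  have h : AlmostSubset (A (f m)) (⋂ k ∈ Finset.range (n + 1), A (f k)) :=
    almostSubset_biInter fun k hk => hT.almostSubset_of_le (hmax k hk) (hf m)
  exact ((hT.1 _ (hf m)).inter_of_almostSubset h).mono inter_subset_right

lemma exists_upper_bound (hT : IsTower κ A) (f : ℕ → Ordinal) (hf : ∀ n, f n < κ) :
    ∃ γ < κ, ∀ n, f n ≤ γ := by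
  by_contra! hunb
  obtain ⟨X, hXinf, hX⟩ := exists_infinite_almostSubset_of_antitone
    (B := fun n => ⋂ k ∈ Finset.range (n + 1), A (f k))
    (fun m n hmn => biInter_mono (by simpa using hmn) fun _ _ => subset_rfl)
    (hT.infinite_biInter_range f hf)
  refine hT.2.2 ⟨X, hXinf, fun α hα => ?_⟩
  obtain ⟨n, hn⟩ := hunb α hα
  exact ((hX n).trans (almostSubset_of_subset (biInter_subset_of_mem (by simp)))).trans
    (hT.almostSubset_of_le hn.le (hf n))

end IsTower

lemma nonprincipal_iff_compl_mem (U : Ultrafilter ℕ) :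
    Nonprincipal U ↔ ∀ A : Set ℕ, A.Finite → Aᶜ ∈ U := by
  simp only [Nonprincipal, Ultrafilter.compl_mem_iff_notMem]

lemma exists_nonprincipal_mem {s : Set ℕ} (hs : s.Infinite) :
    ∃ U : Ultrafilter ℕ, Nonprincipal U ∧ s ∈ U := by
  have := hs.cofinite_inf_principal_neBot
  have hle := Ultrafilter.of_le (Filter.cofinite ⊓ Filter.principal s)
  refine ⟨Ultrafilter.of (Filter.cofinite ⊓ Filter.principal s),
    (nonprincipal_iff_compl_mem _).2 fun A hA => ?_, ?_⟩
  · exact hle (Filter.mem_inf_of_left hA.compl_mem_cofinite)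
  · exact hle (Filter.mem_inf_of_right (Filter.mem_principal_self s))

lemma isClosed_setOf_nonprincipal : IsClosed {U : Ultrafilter ℕ | Nonprincipal U} := by
  simp only [nonprincipal_iff_compl_mem, ofPred_forall]
  exact isClosed_iInter fun A => isClosed_iInter fun _ => ultrafilter_isClosed_basic _

namespace OmegaStar

instance : CompactSpace OmegaStar :=
  isCompact_iff_compactSpace.1 isClosed_setOf_nonprincipal.isCompact

/-- `s*`, the trace on `ω*` of a basic clopen set of `βℕ`. -/
def basic (s : Set ℕ) : Set OmegaStar := {p | s ∈ p.1}

lemma isOpen_basic (s : Set ℕ) : IsOpen (basic s) :=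
  (ultrafilter_isOpen_basic s).preimage continuous_subtype_val

lemma isClosed_basic (s : Set ℕ) : IsClosed (basic s) :=
  (ultrafilter_isClosed_basic s).preimage continuous_subtype_val

lemma isTopologicalBasis_basic : IsTopologicalBasis (range basic) := by
  have hrange : range basic = preimage (Subtype.val : OmegaStar → Ultrafilter ℕ) ''
      ultrafilterBasis ℕ := by
    rw [ultrafilterBasis, ← range_comp]
    rfl
  rw [hrange]
  exact ultrafilterBasis_is_basis.isInducing IsInducing.subtypeVal

lemma basic_nonempty_iff {s : Set ℕ} : (basic s).Nonempty ↔ s.Infinite := by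
  refine ⟨fun ⟨p, hp⟩ hs => p.2 s hs hp, fun hs => ?_⟩
  obtain ⟨U, hU, hsU⟩ := exists_nonprincipal_mem hs
  exact ⟨⟨U, hU⟩, hsU⟩

lemma basic_subset_basic_iff {s t : Set ℕ} : basic s ⊆ basic t ↔ AlmostSubset s t := by
  refine ⟨fun hst => ?_, fun hst p hs => ?_⟩
  · by_contra hinf
    obtain ⟨p, hp⟩ := basic_nonempty_iff.2 hinf
    have ht : t ∈ p.1 := hst (Filter.mem_of_superset hp sdiff_subset)
    have hempty := Filter.inter_mem hp ht
    rw [sdiff_inter_self] at hempty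
    exact p.1.empty_notMem hempty
  · have hfin : (s \ t)ᶜ ∈ p.1 := (nonprincipal_iff_compl_mem _).1 p.2 _ hst
    refine Filter.mem_of_superset (Filter.inter_mem hs hfin) ?_
    rintro x ⟨hxs, hx⟩
    exact not_not.1 fun hxt => hx ⟨hxs, hxt⟩

variable {κ : Ordinal} {A : Ordinal → Set ℕ}

def towerSet (κ : Ordinal) (A : Ordinal → Set ℕ) : Set OmegaStar :=
  ⋂ α : Iio κ, basic (A α)

lemma isClosed_towerSet : IsClosed (towerSet κ A) :=
  isClosed_iInter fun _ => isClosed_basic _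

lemma isNowhereDense_towerSet (hT : IsTower κ A) : IsNowhereDense (towerSet κ A) := by
  rw [IsNowhereDense, isClosed_towerSet.closure_eq, eq_empty_iff_forall_notMem]
  intro p hp
  obtain ⟨_, ⟨B, rfl⟩, hpB, hB⟩ :=
    isTopologicalBasis_basic.exists_subset_of_mem_open hp isOpen_interior
  refine hT.2.2 ⟨B, basic_nonempty_iff.1 ⟨p, hpB⟩, fun α hα => ?_⟩
  exact basic_subset_basic_iff.1
    ((hB.trans interior_subset).trans (iInter_subset _ (⟨α, hα⟩ : Iio κ)))

lemma exists_basic_subset_of_towerSet_subset (hT : IsTower κ A) {U : Set OmegaStar}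
    (hU : IsOpen U) (hKU : towerSet κ A ⊆ U) : ∃ α < κ, basic (A α) ⊆ U := by
  have : Nonempty (Iio κ) := ⟨⟨0, hT.pos⟩⟩
  have hdir : Directed (· ⊇ ·) fun α : Iio κ => basic (A α) := fun α β =>
    ⟨⟨max α β, mem_Iio.2 (max_lt α.2 β.2)⟩,
      basic_subset_basic_iff.2 (hT.almostSubset_of_le (le_max_left _ _) (max_lt α.2 β.2)),
      basic_subset_basic_iff.2 (hT.almostSubset_of_le (le_max_right _ _) (max_lt α.2 β.2))⟩
  obtain ⟨⟨α, hα⟩, hαU⟩ := exists_subset_nhds_of_compactSpace hdir (fun _ => isClosed_basic _)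
    fun p hp => hU.mem_nhds (hKU hp)
  exact ⟨α, hα, hαU⟩

lemma isPSet_towerSet (hT : IsTower κ A) : IsPSet (towerSet κ A) := by
  intro U hU
  choose α hακ hαU using fun n => exists_basic_subset_of_towerSet_subset hT (hU n).1 (hU n).2
  obtain ⟨γ, hγκ, hγ⟩ := hT.exists_upper_bound α hακ
  refine ⟨basic (A γ), isOpen_basic _, iInter_subset _ (⟨γ, hγκ⟩ : Iio κ),
    subset_iInter fun n => ?_⟩
  exact (basic_subset_basic_iff.2 (hT.almostSubset_of_le (hγ n) hγκ)).trans (hαU n)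

end OmegaStar

/-- If every nonprincipal ultrafilter on ℕ contains a tower, then `ω*` can be covered by
nowhere dense P-sets. -/
theorem cover_by_nwd_Psets_of_towers_in_ultrafilters
    (h : ∀ U : Ultrafilter ℕ, Nonprincipal U →
      ∃ (κ : Ordinal) (A : Ordinal → Set ℕ), IsTower κ A ∧ ∀ α < κ, A α ∈ U) :
    ∃ 𝒞 : Set (Set OmegaStar), (∀ B ∈ 𝒞, IsNowhereDense B ∧ IsPSet B) ∧ ⋃₀ 𝒞 = univ := by
  refine ⟨{K | ∃ κ A, IsTower κ A ∧ K = OmegaStar.towerSet κ A}, ?_, ?_⟩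
  · rintro _ ⟨κ, A, hT, rfl⟩
    exact ⟨OmegaStar.isNowhereDense_towerSet hT, OmegaStar.isPSet_towerSet hT⟩
  · refine eq_univ_of_forall fun p => ?_
    obtain ⟨κ, A, hT, hA⟩ := h p.1 p.2
    exact ⟨OmegaStar.towerSet κ A, ⟨κ, A, hT, rfl⟩, mem_iInter.2 fun α => hA α α.2⟩
end
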